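/- arXiv:2009.01425 — 2 statements merged into one kernel-verified Lean document; each statement's English description precedes it below -/
import Mathlib

section
/- Assume A₀ ≥ 1, A₁ ≥ 1 and A₀ + A₁ ≥ 3, and let μ be the ghost measure of f. Then for every i ≥ 0 and every integer k with 0 ≤ k < 2^i, μ([k/2^i, (k+1)/2^i)) = (1/(A₀+A₁)^i) · (1/σ(∞)) · ( f(2^i + k) + (b₀+b₁)/(A₀+A₁−2) ), where σ(∞) = f(1) + (b₀+b₁)/(A₀+A₁−2). -/
open MeasureTheory Filter Topology

/-- The `N`-th approximant to the ghost measure of `f`: the normalised Dirac comb built from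
the values of `f` on the fundamental region `[2^N, 2^(N+1))`. -/
noncomputable def ghostApprox (f : ℕ → ℕ) (N : ℕ) : Measure ℝ :=
  (∑ n ∈ Finset.range (2 ^ N), (f (2 ^ N + n) : ENNReal))⁻¹ •
    ∑ n ∈ Finset.range (2 ^ N), (f (2 ^ N + n) : ENNReal) • Measure.dirac ((n : ℝ) / 2 ^ N)

/-- Weak (vague) convergence of a sequence of finite measures on `ℝ`. -/
def WeakLimit (μs : ℕ → Measure ℝ) (μ : Measure ℝ) : Prop :=
  ∀ g : BoundedContinuousFunction ℝ ℝ,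
    Tendsto (fun N => ∫ x, g x ∂(μs N)) atTop (𝓝 (∫ x, g x ∂μ))

/-!
Write `A = A₀ + A₁`, `b = b₀ + b₁`, and `S(m, M)` for the sum of `f` over the `2^M` descendants of
`m` at depth `M` of the binary tree. The approximant `μ_N` gives the dyadic interval
`[k/2^i, (k+1)/2^i)` the mass `S(2^i + k, N - i) / S(1, N)`. Since
`S(m, M+1) = S(2m, M) + S(2m+1, M)`, the recursion gives the closed form
`(A-2)·S(m, M) + b·2^M = A^M·((A-2)·f(m) + b)`, so `S(m, M)/A^M → f(m) + b/(A-2)` and the masses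
converge to the claimed value. To pass to `μ` by the portmanteau theorem, the dyadic endpoints
must carry no mass: the closed form together with `f(2^L + j) + b ≤ max(A₀, A₁)^L·(f(1) + b)`
bounds the mass of every level-`L` interval by `(max(A₀, A₁)/A)^L·(f(1) + b)` uniformly in
`N ≥ L`, and `max(A₀, A₁) < A` because `A₀, A₁ ≥ 1`.
-/

open Finset
open scoped ENNReal

structure IsAffineTwoRegular (A₀ A₁ b₀ b₁ : ℕ) (f : ℕ → ℕ) : Prop where
  even : ∀ n, 1 ≤ n → f (2 * n) = A₀ * f n + b₀
  odd : ∀ n, 1 ≤ n → f (2 * n + 1) = A₁ * f n + b₁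

def blockSum (f : ℕ → ℕ) (m M : ℕ) : ℕ := ∑ n ∈ range (2 ^ M), f (2 ^ M * m + n)

@[simp]
lemma blockSum_zero (f : ℕ → ℕ) (m : ℕ) : blockSum f m 0 = f m := by
  simp [blockSum]

lemma blockSum_succ (f : ℕ → ℕ) (m M : ℕ) :
    blockSum f m (M + 1) = blockSum f (2 * m) M + blockSum f (2 * m + 1) M := by
  simp only [blockSum, pow_succ, mul_two, sum_range_add]
  congr 1 <;> refine sum_congr rfl fun n _ => congr_arg f (by ring)

namespace IsAffineTwoRegular

variable {A₀ A₁ b₀ b₁ : ℕ} {f : ℕ → ℕ}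

lemma blockSum_closed_form (hf : IsAffineTwoRegular A₀ A₁ b₀ b₁ f) {m : ℕ} (hm : 1 ≤ m)
    (M : ℕ) :
    ((A₀ + A₁ : ℝ) - 2) * blockSum f m M + (b₀ + b₁) * 2 ^ M =
      (A₀ + A₁ : ℝ) ^ M * (((A₀ + A₁ : ℝ) - 2) * f m + (b₀ + b₁)) := by
  induction M generalizing m with
  | zero => simp
  | succ M ih =>
    have h₀ := ih (m := 2 * m) (by omega)
    have h₁ := ih (m := 2 * m + 1) (by omega)
    rw [hf.even m hm] at h₀
    rw [hf.odd m hm] at h₁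
    rw [blockSum_succ]
    push_cast at h₀ h₁ ⊢
    linear_combination h₀ + h₁

lemma tendsto_blockSum_div_pow (hf : IsAffineTwoRegular A₀ A₁ b₀ b₁ f) (hA : 3 ≤ A₀ + A₁)
    {m : ℕ} (hm : 1 ≤ m) :
    Tendsto (fun M => (blockSum f m M : ℝ) / (A₀ + A₁ : ℝ) ^ M) atTop
      (𝓝 (f m + (b₀ + b₁ : ℝ) / ((A₀ + A₁ : ℝ) - 2))) := by
  have hA' : (3 : ℝ) ≤ A₀ + A₁ := by exact_mod_cast hA
  have hD : (A₀ + A₁ : ℝ) - 2 ≠ 0 := by linarith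
  have hgeom : Tendsto (fun M => (2 / (A₀ + A₁ : ℝ)) ^ M) atTop (𝓝 0) :=
    tendsto_pow_atTop_nhds_zero_of_lt_one (by positivity)
      ((div_lt_one (by linarith)).2 (by linarith))
  have := (hgeom.const_mul ((b₀ + b₁ : ℝ) / ((A₀ + A₁ : ℝ) - 2))).const_sub
    (f m + (b₀ + b₁ : ℝ) / ((A₀ + A₁ : ℝ) - 2))
  rw [mul_zero, sub_zero] at this
  refine this.congr fun M => ?_
  have hpow : (A₀ + A₁ : ℝ) ^ M ≠ 0 := by positivity
  rw [eq_div_iff hpow, div_pow]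
  field_simp
  linear_combination -(hf.blockSum_closed_form hm M)

lemma blockSum_le (hf : IsAffineTwoRegular A₀ A₁ b₀ b₁ f) (hA : 3 ≤ A₀ + A₁) {m : ℕ}
    (hm : 1 ≤ m) (M : ℕ) :
    (blockSum f m M : ℝ) ≤ (A₀ + A₁ : ℝ) ^ M * (f m + (b₀ + b₁)) := by
  have hA' : (3 : ℝ) ≤ A₀ + A₁ := by exact_mod_cast hA
  have hb : (0 : ℝ) ≤ b₀ + b₁ := by positivity
  have hpow : (0 : ℝ) ≤ (A₀ + A₁ : ℝ) ^ M := by positivity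
  refine le_of_mul_le_mul_left ?_ (by linarith : (0 : ℝ) < (A₀ + A₁ : ℝ) - 2)
  nlinarith [hf.blockSum_closed_form hm M, mul_nonneg hpow hb,
    mul_nonneg hb (pow_nonneg zero_le_two M : (0 : ℝ) ≤ 2 ^ M)]

lemma pow_le_blockSum_one (hf : IsAffineTwoRegular A₀ A₁ b₀ b₁ f) (hA : 3 ≤ A₀ + A₁)
    (hf1 : 1 ≤ f 1) (N : ℕ) : (A₀ + A₁ : ℝ) ^ N ≤ blockSum f 1 N := by
  have hA' : (3 : ℝ) ≤ A₀ + A₁ := by exact_mod_cast hA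
  have hf1' : (1 : ℝ) ≤ f 1 := by exact_mod_cast hf1
  have hb : (0 : ℝ) ≤ b₀ + b₁ := by positivity
  have h2A : (2 : ℝ) ^ N ≤ (A₀ + A₁ : ℝ) ^ N := pow_le_pow_left₀ zero_le_two (by linarith) N
  refine le_of_mul_le_mul_left ?_ (by linarith : (0 : ℝ) < (A₀ + A₁ : ℝ) - 2)
  nlinarith [hf.blockSum_closed_form le_rfl N, mul_le_mul_of_nonneg_left h2A hb,
    mul_le_mul_of_nonneg_left hf1' (by positivity : (0 : ℝ) ≤ (A₀ + A₁ : ℝ) ^ N)]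

lemma blockSum_one_pos (hf : IsAffineTwoRegular A₀ A₁ b₀ b₁ f) (hA : 3 ≤ A₀ + A₁)
    (hf1 : 1 ≤ f 1) (N : ℕ) : 0 < blockSum f 1 N := by
  have hA' : (0 : ℝ) < A₀ + A₁ := by exact_mod_cast (by omega : 0 < A₀ + A₁)
  exact_mod_cast (pow_pos hA' N).trans_le (hf.pow_le_blockSum_one hA hf1 N)

lemma apply_two_mul_add_add_le (hf : IsAffineTwoRegular A₀ A₁ b₀ b₁ f) {B : ℕ}
    (hB₀ : A₀ ≤ B) (hB₁ : A₁ ≤ B) (hB : 2 ≤ B) {p r : ℕ} (hp : 1 ≤ p) (hr : r < 2) :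
    f (2 * p + r) + (b₀ + b₁) ≤ B * (f p + (b₀ + b₁)) := by
  have hb : 2 * (b₀ + b₁) ≤ B * (b₀ + b₁) := Nat.mul_le_mul_right _ hB
  interval_cases r
  · rw [add_zero, hf.even p hp]
    nlinarith [Nat.mul_le_mul_right (f p) hB₀]
  · rw [hf.odd p hp]
    nlinarith [Nat.mul_le_mul_right (f p) hB₁]

lemma apply_two_pow_mul_add_add_le (hf : IsAffineTwoRegular A₀ A₁ b₀ b₁ f) {B : ℕ}
    (hB₀ : A₀ ≤ B) (hB₁ : A₁ ≤ B) (hB : 2 ≤ B) {m : ℕ} (hm : 1 ≤ m) {M j : ℕ}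
    (hj : j < 2 ^ M) : f (2 ^ M * m + j) + (b₀ + b₁) ≤ B ^ M * (f m + (b₀ + b₁)) := by
  induction M generalizing j with
  | zero => simp_all
  | succ M ih =>
    have hparent : 2 ^ (M + 1) * m + j = 2 * (2 ^ M * m + j / 2) + j % 2 := by
      have : 2 ^ (M + 1) * m = 2 * (2 ^ M * m) := by ring
      omega
    have hp : 1 ≤ 2 ^ M * m + j / 2 :=
      le_add_right (Nat.one_le_two_pow.trans (Nat.le_mul_of_pos_right _ hm))
    rw [hparent, pow_succ']
    calc f (2 * (2 ^ M * m + j / 2) + j % 2) + (b₀ + b₁)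
        ≤ B * (f (2 ^ M * m + j / 2) + (b₀ + b₁)) :=
          hf.apply_two_mul_add_add_le hB₀ hB₁ hB hp (Nat.mod_lt _ two_pos)
      _ ≤ B * (B ^ M * (f m + (b₀ + b₁))) :=
          Nat.mul_le_mul_left _ (ih (by rw [pow_succ] at hj; omega))
      _ = B * B ^ M * (f m + (b₀ + b₁)) := (mul_assoc _ _ _).symm

end IsAffineTwoRegular

def dyadicInterval (L j : ℕ) : Set ℝ := Set.Ico ((j : ℝ) / 2 ^ L) (((j : ℝ) + 1) / 2 ^ L)

lemma div_two_pow_add_mem_dyadicInterval_iff {L M n j : ℕ} :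
    (n : ℝ) / 2 ^ (L + M) ∈ dyadicInterval L j ↔ n / 2 ^ M = j := by
  have hscale : (n : ℝ) / 2 ^ (L + M) = (n : ℝ) / 2 ^ M / 2 ^ L := by
    rw [pow_add, div_div, mul_comm]
  rw [dyadicInterval, Set.mem_Ico, hscale, div_le_div_iff_of_pos_right (by positivity),
    div_lt_div_iff_of_pos_right (by positivity), ← Nat.floor_div_eq_div (K := ℝ),
    Nat.floor_eq_iff (by positivity), Nat.cast_pow, Nat.cast_ofNat]

lemma blockSum_one (f : ℕ → ℕ) (N : ℕ) :
    blockSum f 1 N = ∑ n ∈ range (2 ^ N), f (2 ^ N + n) := by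
  simp [blockSum]

lemma ghostApprox_apply (f : ℕ → ℕ) (N : ℕ) {s : Set ℝ} (hs : MeasurableSet s)
    [DecidablePred fun n : ℕ => (n : ℝ) / 2 ^ N ∈ s] :
    ghostApprox f N s =
      (∑ n ∈ (range (2 ^ N)).filter (fun n : ℕ => (n : ℝ) / 2 ^ N ∈ s),
        (f (2 ^ N + n) : ℝ≥0∞)) / blockSum f 1 N := by
  rw [ghostApprox, Measure.smul_apply, Measure.finsetSum_apply, sum_filter, blockSum_one,
    ENNReal.div_eq_inv_mul]
  simp [Measure.dirac_apply' _ hs, Set.indicator_apply]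

lemma isProbabilityMeasure_ghostApprox {f : ℕ → ℕ} {N : ℕ} (h : blockSum f 1 N ≠ 0) :
    IsProbabilityMeasure (ghostApprox f N) := by
  classical
  constructor
  rw [ghostApprox_apply f N MeasurableSet.univ]
  simp only [Set.mem_univ, filter_true, blockSum_one, Nat.cast_sum]
  rw [← Nat.cast_sum, ← blockSum_one]
  exact ENNReal.div_self (by exact_mod_cast h) (ENNReal.natCast_ne_top _)

lemma ghostApprox_compl_Ico_zero_one (f : ℕ → ℕ) (N : ℕ) :
    ghostApprox f N (Set.Ico 0 1)ᶜ = 0 := by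
  classical
  rw [ghostApprox_apply f N measurableSet_Ico.compl, sum_eq_zero, ENNReal.zero_div]
  intro n hn
  obtain ⟨hn, hs⟩ := mem_filter.1 hn
  refine absurd ⟨by positivity, (div_lt_one (by positivity)).2 ?_⟩ hs
  exact_mod_cast mem_range.1 hn

lemma ghostApprox_dyadicInterval (f : ℕ → ℕ) {L j : ℕ} (hj : j < 2 ^ L) (M : ℕ)
    (h : blockSum f 1 (L + M) ≠ 0) :
    ghostApprox f (L + M) (dyadicInterval L j) =
      ENNReal.ofReal ((blockSum f (2 ^ L + j) M : ℝ) / blockSum f 1 (L + M)) := by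
  classical
  have hcell : (range (2 ^ (L + M))).filter
      (fun n : ℕ => (n : ℝ) / 2 ^ (L + M) ∈ dyadicInterval L j) =
        Ico (j * 2 ^ M) (j * 2 ^ M + 2 ^ M) := by
    ext n
    have hlt : j * 2 ^ M + 2 ^ M ≤ 2 ^ L * 2 ^ M := by
      rw [← add_one_mul]; exact Nat.mul_le_mul_right _ hj
    have hdiv : n / 2 ^ M = j ↔ j * 2 ^ M ≤ n ∧ n < j * 2 ^ M + 2 ^ M := by
      rw [← Nat.le_div_iff_mul_le (by positivity), ← add_one_mul,
        ← Nat.div_lt_iff_lt_mul (by positivity)]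
      omega
    rw [mem_filter, mem_range, mem_Ico, div_two_pow_add_mem_dyadicInterval_iff, hdiv, pow_add]
    omega
  rw [ghostApprox_apply f _ (s := dyadicInterval L j) measurableSet_Ico, hcell,
    sum_Ico_eq_sum_range, add_tsub_cancel_left, ENNReal.ofReal_div_of_pos (by positivity)]
  simp only [ENNReal.ofReal_natCast, blockSum]
  push_cast
  congr 1
  refine sum_congr rfl fun n _ => ?_
  ring_nf

lemma ghostApprox_Iio_zero (f : ℕ → ℕ) (N : ℕ) : ghostApprox f N (Set.Iio 0) = 0 := by
  refine measure_mono_null (fun x hx => ?_) (ghostApprox_compl_Ico_zero_one f N)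
  exact fun hx' => (Set.mem_Iio.1 hx).not_ge hx'.1

lemma dyadicInterval_subset_compl_Ico_zero_one {L j : ℕ} (hj : 2 ^ L ≤ j) :
    dyadicInterval L j ⊆ (Set.Ico 0 1)ᶜ := by
  intro x hx hx'
  have h1 : (1 : ℝ) ≤ (j : ℝ) / 2 ^ L := (one_le_div (by positivity)).2 (by exact_mod_cast hj)
  exact (not_lt.2 (h1.trans hx.1)) hx'.2

lemma Ioo_subset_Iio_union_dyadicInterval (L j : ℕ) :
    Set.Ioo (((j : ℝ) - 1) / 2 ^ L) (((j : ℝ) + 1) / 2 ^ L) ⊆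
      Set.Iio 0 ∪ dyadicInterval L (j - 1) ∪ dyadicInterval L j := by
  rintro x ⟨hlo, hhi⟩
  rcases lt_or_ge x 0 with hx₀ | hx₀
  · exact Or.inl (Or.inl hx₀)
  rcases lt_or_ge x ((j : ℝ) / 2 ^ L) with hxj | hxj
  · have hj : 1 ≤ j := by
      by_contra! hj
      rw [Nat.lt_one_iff.1 hj, Nat.cast_zero, zero_div] at hxj
      exact (not_lt.2 hx₀) hxj
    have hcast : ((j - 1 : ℕ) : ℝ) = j - 1 := by push_cast [hj]; ring
    refine Or.inl (Or.inr ⟨?_, ?_⟩)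
    · rw [hcast]; exact hlo.le
    · rw [hcast, sub_add_cancel]; exact hxj
  · exact Or.inr ⟨hxj, hhi⟩

lemma IsAffineTwoRegular.ghostApprox_dyadicInterval_le {A₀ A₁ b₀ b₁ : ℕ} {f : ℕ → ℕ}
    (hf : IsAffineTwoRegular A₀ A₁ b₀ b₁ f) (hA : 3 ≤ A₀ + A₁) (hf1 : 1 ≤ f 1) {L N : ℕ}
    (hLN : L ≤ N) (j : ℕ) :
    ghostApprox f N (dyadicInterval L j) ≤
      ENNReal.ofReal (((max A₀ A₁ : ℕ) / (A₀ + A₁ : ℝ)) ^ L * (f 1 + (b₀ + b₁))) := by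
  obtain ⟨M, rfl⟩ := Nat.exists_eq_add_of_le hLN
  rcases lt_or_ge j (2 ^ L) with hj | hj
  swap
  · rw [measure_mono_null (dyadicInterval_subset_compl_Ico_zero_one hj)
      (ghostApprox_compl_Ico_zero_one f _)]
    exact zero_le
  rw [ghostApprox_dyadicInterval f hj M (hf.blockSum_one_pos hA hf1 _).ne']
  refine ENNReal.ofReal_le_ofReal ?_
  have hA' : (0 : ℝ) < A₀ + A₁ := by exact_mod_cast (by omega : 0 < A₀ + A₁)
  have hleaf : (f (2 ^ L + j) : ℝ) + (b₀ + b₁) ≤ (max A₀ A₁ : ℕ) ^ L * (f 1 + (b₀ + b₁)) := by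
    have := hf.apply_two_pow_mul_add_add_le (le_max_left A₀ A₁) (le_max_right A₀ A₁)
      (by omega) le_rfl hj
    rw [mul_one] at this
    exact_mod_cast this
  have hnum := (hf.blockSum_le hA (m := 2 ^ L + j) (by omega) M).trans
    (mul_le_mul_of_nonneg_left hleaf (pow_nonneg hA'.le M))
  rw [div_le_iff₀ (by exact_mod_cast hf.blockSum_one_pos hA hf1 _)]
  calc (blockSum f (2 ^ L + j) M : ℝ)
      ≤ (A₀ + A₁ : ℝ) ^ M * ((max A₀ A₁ : ℕ) ^ L * (f 1 + (b₀ + b₁))) := hnum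
    _ = ((max A₀ A₁ : ℕ) / (A₀ + A₁ : ℝ)) ^ L * (f 1 + (b₀ + b₁)) *
          (A₀ + A₁ : ℝ) ^ (L + M) := by
      rw [div_pow, pow_add]
      field_simp
    _ ≤ _ := mul_le_mul_of_nonneg_left (hf.pow_le_blockSum_one hA hf1 _) (by positivity)

lemma IsAffineTwoRegular.tendsto_ghostApprox_dyadicInterval {A₀ A₁ b₀ b₁ : ℕ} {f : ℕ → ℕ}
    (hf : IsAffineTwoRegular A₀ A₁ b₀ b₁ f) (hA : 3 ≤ A₀ + A₁) (hf1 : 1 ≤ f 1) {L j : ℕ}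
    (hj : j < 2 ^ L) :
    Tendsto (fun M => ghostApprox f (L + M) (dyadicInterval L j)) atTop
      (𝓝 (ENNReal.ofReal (1 / (A₀ + A₁ : ℝ) ^ L *
        (1 / (f 1 + (b₀ + b₁ : ℝ) / ((A₀ + A₁ : ℝ) - 2))) *
        (f (2 ^ L + j) + (b₀ + b₁ : ℝ) / ((A₀ + A₁ : ℝ) - 2))))) := by
  have hA' : (3 : ℝ) ≤ A₀ + A₁ := by exact_mod_cast hA
  have hσ : (0 : ℝ) < f 1 + (b₀ + b₁ : ℝ) / ((A₀ + A₁ : ℝ) - 2) := by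
    have : (0 : ℝ) < f 1 := by exact_mod_cast hf1
    have : (0 : ℝ) ≤ (b₀ + b₁ : ℝ) / ((A₀ + A₁ : ℝ) - 2) :=
      div_nonneg (by positivity) (by linarith)
    linarith
  have hnum := hf.tendsto_blockSum_div_pow hA (m := 2 ^ L + j) (by omega)
  have hden := ((hf.tendsto_blockSum_div_pow hA le_rfl).comp
    (tendsto_atTop_mono (fun M => Nat.le_add_left M L) tendsto_id)).const_mul ((A₀ + A₁ : ℝ) ^ L)
  convert ENNReal.tendsto_ofReal (hnum.div hden (mul_pos (by positivity) hσ).ne') using 2 with M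
  · rw [ghostApprox_dyadicInterval f hj M (hf.blockSum_one_pos hA hf1 _).ne']
    congr 1
    simp only [Pi.div_apply, Function.comp_apply, pow_add]
    field_simp
  · congr 1
    field_simp

section WeakLimit

variable {μs : ℕ → Measure ℝ} {μ : Measure ℝ} [∀ N, IsProbabilityMeasure (μs N)]
  [IsProbabilityMeasure μ]

lemma WeakLimit.le_liminf_measure_open (h : WeakLimit μs μ) {G : Set ℝ} (hG : IsOpen G) :
    μ G ≤ atTop.liminf fun N => μs N G :=
  ProbabilityMeasure.le_liminf_measure_open_of_tendsto (μs := fun N => ⟨μs N, inferInstance⟩)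
    (μ := ⟨μ, inferInstance⟩) (ProbabilityMeasure.tendsto_iff_forall_integral_tendsto.2 h) hG

lemma WeakLimit.measure_singleton_le (h : WeakLimit μs μ) (hneg : ∀ N, μs N (Set.Iio 0) = 0)
    {c : ℕ → ℝ≥0∞} (hcell : ∀ L N j, L ≤ N → μs N (dyadicInterval L j) ≤ c L) (L j : ℕ) :
    μ {(j : ℝ) / 2 ^ L} ≤ 2 * c L := by
  set U := Set.Ioo (((j : ℝ) - 1) / 2 ^ L) (((j : ℝ) + 1) / 2 ^ L)
  have hxU : (j : ℝ) / 2 ^ L ∈ U :=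
    ⟨div_lt_div_of_pos_right (by linarith) (by positivity),
      div_lt_div_of_pos_right (by linarith) (by positivity)⟩
  have hU : ∀ N, L ≤ N → μs N U ≤ 2 * c L := fun N hN =>
    calc μs N U
        ≤ μs N (Set.Iio 0) + μs N (dyadicInterval L (j - 1)) + μs N (dyadicInterval L j) :=
          (measure_mono (Ioo_subset_Iio_union_dyadicInterval L j)).trans
            ((measure_union_le _ _).trans (by gcongr; exact measure_union_le _ _))
      _ ≤ 0 + c L + c L := by gcongr <;> simp [hneg, hcell, hN]
      _ = 2 * c L := by rw [zero_add, two_mul]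
  calc μ {(j : ℝ) / 2 ^ L} ≤ μ U := measure_mono (Set.singleton_subset_iff.2 hxU)
    _ ≤ atTop.liminf fun N => μs N U := h.le_liminf_measure_open isOpen_Ioo
    _ ≤ 2 * c L := liminf_le_of_frequently_le' (eventually_atTop.2 ⟨L, hU⟩).frequently

lemma WeakLimit.measure_singleton_eq_zero (h : WeakLimit μs μ)
    (hneg : ∀ N, μs N (Set.Iio 0) = 0) {c : ℕ → ℝ≥0∞}
    (hcell : ∀ L N j, L ≤ N → μs N (dyadicInterval L j) ≤ c L) (hc : Tendsto c atTop (𝓝 0))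
    (L j : ℕ) : μ {(j : ℝ) / 2 ^ L} = 0 := by
  have hrefine : ∀ M, μ {(j : ℝ) / 2 ^ L} ≤ 2 * c (L + M) := fun M => by
    have hx : (j : ℝ) / 2 ^ L = ((j * 2 ^ M : ℕ) : ℝ) / 2 ^ (L + M) := by
      push_cast
      rw [pow_add]
      field_simp
    rw [hx]
    exact h.measure_singleton_le hneg hcell _ _
  have hlim : Tendsto (fun M => 2 * c (L + M)) atTop (𝓝 0) := by
    simpa using ENNReal.Tendsto.const_mul
      (hc.comp (tendsto_atTop_mono (fun M => Nat.le_add_left M L) tendsto_id))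
      (Or.inr ENNReal.ofNat_ne_top)
  exact le_antisymm (ge_of_tendsto' hlim hrefine) zero_le

end WeakLimit

theorem stmt_10_general (A₀ A₁ b₀ b₁ : ℕ)
    (f : ℕ → ℕ) (hf1 : 1 ≤ f 1)
    (heven : ∀ n, 1 ≤ n → f (2 * n) = A₀ * f n + b₀)
    (hodd : ∀ n, 1 ≤ n → f (2 * n + 1) = A₁ * f n + b₁)
    (hA0 : 1 ≤ A₀) (hA1 : 1 ≤ A₁) (hA : 3 ≤ A₀ + A₁)
    (μ : Measure ℝ) (hμ : IsProbabilityMeasure μ)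
    (hlim : WeakLimit (ghostApprox f) μ) :
    ∀ i k : ℕ, k < 2 ^ i →
      μ (Set.Ico ((k : ℝ) / 2 ^ i) (((k : ℝ) + 1) / 2 ^ i)) =
        ENNReal.ofReal ((1 / ((A₀ : ℝ) + A₁) ^ i) *
          (1 / ((f 1 : ℝ) + ((b₀ : ℝ) + b₁) / ((A₀ : ℝ) + A₁ - 2))) *
          ((f (2 ^ i + k) : ℝ) + ((b₀ : ℝ) + b₁) / ((A₀ : ℝ) + A₁ - 2))) := by
  intro i k hk
  have hf : IsAffineTwoRegular A₀ A₁ b₀ b₁ f := ⟨heven, hodd⟩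
  have hprob := fun N => isProbabilityMeasure_ghostApprox (hf.blockSum_one_pos hA hf1 N).ne'
  have hratio : ((max A₀ A₁ : ℕ) : ℝ) / (A₀ + A₁ : ℝ) < 1 :=
    (div_lt_one (by positivity)).2 (by exact_mod_cast (by omega : max A₀ A₁ < A₀ + A₁))
  have hdecay := ENNReal.tendsto_ofReal
    ((tendsto_pow_atTop_nhds_zero_of_lt_one (by positivity) hratio).mul_const
      ((f 1 : ℝ) + (b₀ + b₁)))
  rw [zero_mul, ENNReal.ofReal_zero] at hdecay
  have hatom : ∀ j : ℕ, μ {(j : ℝ) / 2 ^ i} = 0 :=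
    hlim.measure_singleton_eq_zero (ghostApprox_Iio_zero f)
      (fun L N j hLN => hf.ghostApprox_dyadicInterval_le hA hf1 hLN j) hdecay i
  have hfrontier : μ (frontier (dyadicInterval i k)) = 0 := by
    rw [dyadicInterval, frontier_Ico (by gcongr; linarith), Set.insert_eq]
    exact measure_union_null (hatom k) (by exact_mod_cast hatom (k + 1))
  exact tendsto_nhds_unique
    ((tendsto_measure_of_null_frontier (fun _ => hlim.le_liminf_measure_open) hfrontier).comp
      (tendsto_atTop_mono (fun M => Nat.le_add_left M i) tendsto_id))
    (hf.tendsto_ghostApprox_dyadicInterval hA hf1 hk)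

theorem stmt_10 (A₀ A₁ b₀ b₁ : ℕ) (hnz : ¬(A₀ = 0 ∧ A₁ = 0 ∧ b₀ = 0 ∧ b₁ = 0))
    (f : ℕ → ℕ) (hf1 : 1 ≤ f 1)
    (heven : ∀ n, 1 ≤ n → f (2 * n) = A₀ * f n + b₀)
    (hodd : ∀ n, 1 ≤ n → f (2 * n + 1) = A₁ * f n + b₁)
    (hA0 : 1 ≤ A₀) (hA1 : 1 ≤ A₁) (hA : 3 ≤ A₀ + A₁)
    (μ : Measure ℝ) (hμ : IsProbabilityMeasure μ)
    (hlim : WeakLimit (ghostApprox f) μ) :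
    ∀ i k : ℕ, k < 2 ^ i →
      μ (Set.Ico ((k : ℝ) / 2 ^ i) (((k : ℝ) + 1) / 2 ^ i)) =
        ENNReal.ofReal ((1 / ((A₀ : ℝ) + A₁) ^ i) *
          (1 / ((f 1 : ℝ) + ((b₀ : ℝ) + b₁) / ((A₀ : ℝ) + A₁ - 2))) *
          ((f (2 ^ i + k) : ℝ) + ((b₀ : ℝ) + b₁) / ((A₀ : ℝ) + A₁ - 2))) :=
  stmt_10_general A₀ A₁ b₀ b₁ f hf1 heven hodd hA0 hA1 hA μ hμ hlim
end

section
/- Let f(n) = n. Then the probability measures μ_N = (1/Σ(N)) Σ_{n=0}^{2^N−1} (2^N + n)·δ_{n/2^N}, where Σ(N) = Σ_{n=0}^{2^N−1} (2^N + n), converge weakly as N → ∞ to the absolutely continuous probability measure on [0,1) with density g(x) = (2 + 2x)/3 with respect to Lebesgue measure. -/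
open MeasureTheory Filter Topology

/-!
The integral of `g` against `μ_N` is the mean of the values `g (n / 2^N)` weighted by
`f (2^N + n)`. When these weights are `c N * φ (n / 2^N)` for a continuous probability density `φ`
on `[0, 1]`, the factor `c N` cancels and the mean is the ratio of the dyadic Riemann sums of
`φ * g` and of `φ`, which converge, by uniform continuity on `[0, 1]`, to `∫₀¹ φ g` and `∫₀¹ φ = 1`.
For `f n = n` one takes `c N = 3 * 2^N / 2` and `φ x = (2 + 2x) / 3`.
-/

theorem abs_sub_integral_le_of_forall_abs_sub_le {f : ℝ → ℝ} {a b ε : ℝ} (hab : a ≤ b)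
    (hf : IntervalIntegrable f volume a b) (hε : ∀ x ∈ Set.Ioc a b, |f a - f x| ≤ ε) :
    |(b - a) * f a - ∫ x in a..b, f x| ≤ ε * (b - a) := by
  have h := intervalIntegral.norm_integral_le_of_norm_le_const (f := fun x => f a - f x)
    fun x hx => hε x (by rwa [Set.uIoc_of_le hab] at hx)
  rwa [intervalIntegral.integral_sub intervalIntegrable_const hf, intervalIntegral.integral_const,
    smul_eq_mul, abs_of_nonneg (sub_nonneg.mpr hab)] at h

theorem tendsto_riemannSum_of_continuousOn {f : ℝ → ℝ} (hf : ContinuousOn f (Set.Icc 0 1)) :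
    Tendsto (fun m : ℕ => (∑ k ∈ Finset.range m, f (k / m)) / m) atTop
      (𝓝 (∫ x in (0 : ℝ)..1, f x)) := by
  rw [Metric.tendsto_atTop]
  intro ε hε
  obtain ⟨δ, hδ, hfδ⟩ := Metric.uniformContinuousOn_iff.mp
    (isCompact_Icc.uniformContinuousOn_of_continuous hf) (ε / 2) (half_pos hε)
  obtain ⟨M, hM⟩ := exists_nat_one_div_lt hδ
  refine ⟨M + 1, fun m hm => ?_⟩
  have hm0 : (0 : ℝ) < m := by exact_mod_cast (Nat.succ_pos M).trans_le hm
  have hmesh : 1 / (m : ℝ) < δ :=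
    lt_of_le_of_lt (one_div_le_one_div_of_le (by positivity) (by exact_mod_cast hm)) hM
  set a : ℕ → ℝ := fun k => k / m with ha
  have hstep : ∀ k, a (k + 1) - a k = 1 / m := fun k => by
    simp only [ha]; push_cast; ring
  have hle : ∀ k, a k ≤ a (k + 1) := fun k => by linarith [hstep k, one_div_pos.mpr hm0]
  have hsub : ∀ k < m, Set.Icc (a k) (a (k + 1)) ⊆ Set.Icc 0 1 := fun k hk =>
    Set.Icc_subset_Icc (by positivity) <| by
      simp only [ha]; rw [div_le_one hm0]; exact_mod_cast hk
  have hint : ∀ k < m, IntervalIntegrable f volume (a k) (a (k + 1)) := fun k hk =>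
    (hf.mono (hsub k hk)).intervalIntegrable_of_Icc (hle k)
  have hpiece : ∀ k ∈ Finset.range m,
      |f (a k) / m - ∫ x in a k..a (k + 1), f x| ≤ ε / 2 / m := by
    intro k hk
    have hk := Finset.mem_range.mp hk
    have h := abs_sub_integral_le_of_forall_abs_sub_le (ε := ε / 2) (hle k) (hint k hk)
      fun x hx => by
        refine (hfδ _ (hsub k hk ⟨le_rfl, hle k⟩) x (hsub k hk (Set.Ioc_subset_Icc_self hx)) ?_).le
        rw [Real.dist_eq, abs_sub_comm, abs_of_nonneg (by linarith [hx.1])]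
        linarith [hx.2, hstep k]
    rwa [hstep, one_div_mul_eq_div, ← div_eq_mul_one_div] at h
  have hsplit : ∫ x in (0 : ℝ)..1, f x = ∑ k ∈ Finset.range m, ∫ x in a k..a (k + 1), f x := by
    rw [intervalIntegral.sum_integral_adjacent_intervals hint]
    simp [ha, hm0.ne']
  rw [Real.dist_eq, hsplit, Finset.sum_div, ← Finset.sum_sub_distrib]
  calc |∑ k ∈ Finset.range m, (f (a k) / m - ∫ x in a k..a (k + 1), f x)|
      ≤ ∑ k ∈ Finset.range m, ε / 2 / m :=
        (Finset.abs_sum_le_sum_abs _ _).trans (Finset.sum_le_sum hpiece)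
    _ = ε / 2 := by rw [Finset.sum_const, Finset.card_range, nsmul_eq_mul]; field_simp
    _ < ε := half_lt_self hε

theorem tendsto_dyadicRiemannSum_of_continuousOn {f : ℝ → ℝ} (hf : ContinuousOn f (Set.Icc 0 1)) :
    Tendsto (fun N : ℕ => (∑ n ∈ Finset.range (2 ^ N), f (n / 2 ^ N)) / 2 ^ N) atTop
      (𝓝 (∫ x in (0 : ℝ)..1, f x)) := by
  simpa [Function.comp_def] using
    (tendsto_riemannSum_of_continuousOn hf).comp (tendsto_pow_atTop_atTop_of_one_lt one_lt_two)

theorem integral_ghostApprox (f : ℕ → ℕ) (N : ℕ) (g : ℝ → ℝ) :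
    ∫ x, g x ∂ghostApprox f N =
      (∑ n ∈ Finset.range (2 ^ N), (f (2 ^ N + n) : ℝ) * g (n / 2 ^ N)) /
        ∑ n ∈ Finset.range (2 ^ N), (f (2 ^ N + n) : ℝ) := by
  rw [ghostApprox, integral_smul_measure, integral_finsetSum_measure fun n _ =>
    (integrable_dirac (by simp)).smul_measure (ENNReal.natCast_ne_top _)]
  simp only [integral_smul_measure, integral_dirac, ← Nat.cast_sum, ENNReal.toReal_inv,
    ENNReal.toReal_natCast, smul_eq_mul]
  push_cast
  ring

theorem weakLimit_ghostApprox_of_eq_mul {f : ℕ → ℕ} {c : ℕ → ℝ} {φ : ℝ → ℝ}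
    (hf : ∀ N, ∀ n < 2 ^ N, (f (2 ^ N + n) : ℝ) = c N * φ (n / 2 ^ N)) (hc : ∀ N, c N ≠ 0)
    (hφ : ContinuousOn φ (Set.Icc 0 1)) (hφ_nonneg : ∀ x ∈ Set.Ico (0 : ℝ) 1, 0 ≤ φ x)
    (hφ_int : ∫ x in (0 : ℝ)..1, φ x = 1) :
    WeakLimit (ghostApprox f)
      ((volume.restrict (Set.Ico (0 : ℝ) 1)).withDensity fun x => ENNReal.ofReal (φ x)) := by
  intro g
  have hnum := tendsto_dyadicRiemannSum_of_continuousOn (f := fun x => φ x * g x)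
    (hφ.mul g.continuous.continuousOn)
  have hden := tendsto_dyadicRiemannSum_of_continuousOn hφ
  rw [hφ_int] at hden
  have hlim : ∫ x, g x ∂(volume.restrict (Set.Ico (0 : ℝ) 1)).withDensity
      (fun x => ENNReal.ofReal (φ x)) = ∫ x in (0 : ℝ)..1, φ x * g x := by
    rw [integral_withDensity_eq_integral_toReal_smul₀
      ((hφ.mono Set.Ico_subset_Icc_self).aemeasurable measurableSet_Ico).ennreal_ofReal
      (ae_of_all _ fun _ => ENNReal.ofReal_lt_top),
      intervalIntegral.integral_of_le zero_le_one, ← integral_Ico_eq_integral_Ioc]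
    refine setIntegral_congr_fun measurableSet_Ico fun x hx => ?_
    rw [ENNReal.toReal_ofReal (hφ_nonneg x hx), smul_eq_mul]
  rw [hlim, ← div_one (∫ x in (0 : ℝ)..1, φ x * g x)]
  refine (hnum.div hden one_ne_zero).congr fun N => ?_
  have hsum : ∀ w : ℝ → ℝ, ∑ n ∈ Finset.range (2 ^ N), (f (2 ^ N + n) : ℝ) * w (n / 2 ^ N) =
      c N * ∑ n ∈ Finset.range (2 ^ N), φ (n / 2 ^ N) * w (n / 2 ^ N) := fun w => by
    rw [Finset.mul_sum]
    exact Finset.sum_congr rfl fun n hn => by rw [hf N n (Finset.mem_range.mp hn), mul_assoc]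
  have htotal := hsum fun _ => 1
  simp only [mul_one] at htotal
  rw [integral_ghostApprox, hsum, htotal, mul_div_mul_left _ _ (hc N)]
  exact div_div_div_cancel_right₀ (pow_ne_zero N two_ne_zero) _ _

theorem stmt_17 :
    WeakLimit (ghostApprox (fun n => n))
      ((volume.restrict (Set.Ico (0:ℝ) 1)).withDensity
        fun x => ENNReal.ofReal ((2 + 2 * x) / 3)) := by
  refine weakLimit_ghostApprox_of_eq_mul (c := fun N => 3 * 2 ^ N / 2) (fun N n _ => ?_)
    (fun N => by positivity) (by fun_prop) (fun x hx => by have := hx.1; positivity) ?_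
  · push_cast
    field_simp
  · rw [intervalIntegral.integral_div, intervalIntegral.integral_add intervalIntegrable_const
      ((continuous_const_mul 2).intervalIntegrable _ _), intervalIntegral.integral_const_mul]
    norm_num
end
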